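/- LP^MLN programs 𝔽 and 𝔾 over 𝒫 are structurally equivalent if and only if for every interpretation X, the reducts (𝔽̄_X)^X and (𝔾̄_X)^X are classically equivalent, i.e., satisfied by exactly the same interpretations. -/

import Mathlib

namespace LPMLN

/-- Propositional formulas over a set of atoms `P`, built from atoms and `⊥`
using `∧`, `∨`, `→`. -/
inductive Formula (P : Type) : Type where
  | atom : P → Formula P
  | bot  : Formula P
  | and  : Formula P → Formula P → Formula P
  | or   : Formula P → Formula P → Formula P
  | imp  : Formula P → Formula P → Formula P
deriving DecidableEq

variable {P : Type} [DecidableEq P]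

/-- `¬F` abbreviates `F → ⊥`. -/
def Formula.neg (F : Formula P) : Formula P := .imp F .bot

/-- Classical evaluation of a formula in an interpretation `X ⊆ P`. -/
def Formula.eval (X : Finset P) : Formula P → Bool
  | .atom p => decide (p ∈ X)
  | .bot => false
  | .and F G => F.eval X && G.eval X
  | .or F G => F.eval X || G.eval X
  | .imp F G => !(F.eval X) || G.eval X

/-- Classical satisfaction `X ⊨ F`. -/
def Formula.sat (X : Finset P) (F : Formula P) : Prop := F.eval X = true

/-- The reduct `F^X`: every maximal subformula not satisfied by `X` is replaced by `⊥`. -/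
def Formula.reduct (X : Finset P) : Formula P → Formula P
  | .atom p => if p ∈ X then .atom p else .bot
  | .bot => .bot
  | .and F G => if (Formula.and F G).eval X then .and (F.reduct X) (G.reduct X) else .bot
  | .or F G => if (Formula.or F G).eval X then .or (F.reduct X) (G.reduct X) else .bot
  | .imp F G => if (Formula.imp F G).eval X then .imp (F.reduct X) (G.reduct X) else .bot

/-- `X` satisfies a (finite) set of formulas. -/
def satSet (X : Finset P) (Γ : Finset (Formula P)) : Prop := ∀ F ∈ Γ, F.sat X

/-- The reduct `Γ^X` of a finite set of formulas. -/
def reductSet (X : Finset P) (Γ : Finset (Formula P)) : Finset (Formula P) :=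
  Γ.image (Formula.reduct X)

/-- `X` is a stable model of `Γ` if `X ⊨ Γ^X` and no proper subset of `X` satisfies `Γ^X`. -/
def StableModel (Γ : Finset (Formula P)) (X : Finset P) : Prop :=
  satSet X (reductSet X Γ) ∧ ∀ Y, Y ⊂ X → ¬ satSet Y (reductSet X Γ)

/-- A weight is a real number (soft) or the symbol `α` (hard). -/
inductive Weight : Type where
  | soft : ℝ → Weight
  | hard : Weight

noncomputable instance : DecidableEq Weight := Classical.decEq _

/-- An LP^MLN program: a finite set of weighted formulas `w : R`. -/
abbrev Program (P : Type) [DecidableEq P] := Finset (Weight × Formula P)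

/-- `𝔽_X`: the weighted formulas of `𝔽` whose formula is satisfied by `X`. -/
noncomputable def progSat (𝔽 : Program P) (X : Finset P) : Program P :=
  𝔽.filter (fun r => r.2.eval X = true)

/-- `𝔽̄`: the formulas of `𝔽`, with weights dropped. -/
noncomputable def formulas (𝔽 : Program P) : Finset (Formula P) := 𝔽.image Prod.snd

/-- `X` is a soft stable model of `𝔽` (i.e. `X ∈ SM[𝔽]`) if `X` is a stable model of `𝔽̄_X`. -/
def SoftStable (𝔽 : Program P) (X : Finset P) : Prop :=
  StableModel (formulas (progSat 𝔽 X)) X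

/-- w-expressions: either zero or a formal expression `e^{c₁ + c₂·α}` with `c₁ : ℝ`, `c₂ : ℤ`. -/
inductive WExpr : Type where
  | zero : WExpr
  | exp : ℝ → ℤ → WExpr

/-- Multiplication of w-expressions: add exponents componentwise; zero is absorbing. -/
def WExpr.mul : WExpr → WExpr → WExpr
  | .zero, _ => .zero
  | _, .zero => .zero
  | .exp a b, .exp c d => .exp (a + c) (b + d)

/-- Inverse of a w-expression: negate both exponents. -/
def WExpr.inv : WExpr → WExpr
  | .zero => .zero
  | .exp a b => .exp (-a) (-b)

/-- Evaluation of a w-expression at a real number `a`. -/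
noncomputable def WExpr.eval (a : ℝ) : WExpr → ℝ
  | .zero => 0
  | .exp c₁ c₂ => Real.exp (c₁ + c₂ * a)

/-- The real contribution of a weight (hard rules contribute `0` to the soft sum). -/
def softWeight : Weight → ℝ
  | .soft r => r
  | .hard => 0

/-- Sum of the weights of the soft rules of `𝔽`. -/
noncomputable def softSum (𝔽 : Program P) : ℝ := ∑ r ∈ 𝔽, softWeight r.1

/-- The number of hard rules of `𝔽`. -/
noncomputable def hardCount (𝔽 : Program P) : ℤ :=
  ((𝔽.filter (fun r => r.1 = Weight.hard)).card : ℤ)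

/-- `TW(𝔽) = e^{c₁ + c₂·α}` where `c₁` is the sum of the soft weights and
`c₂` the number of hard rules. -/
noncomputable def TW (𝔽 : Program P) : WExpr := .exp (softSum 𝔽) (hardCount 𝔽)

open Classical in
/-- `W_𝔽(X) = TW(𝔽_X)` if `X ∈ SM[𝔽]`, and zero otherwise. -/
noncomputable def W (𝔽 : Program P) (X : Finset P) : WExpr :=
  if SoftStable 𝔽 X then TW (progSat 𝔽 X) else .zero

open Classical in
/-- `W^pnt_𝔽(X) = TW(𝔽 \ 𝔽_X)⁻¹` if `X ∈ SM[𝔽]`, and zero otherwise. -/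
noncomputable def Wpnt (𝔽 : Program P) (X : Finset P) : WExpr :=
  if SoftStable 𝔽 X then (TW (𝔽 \ progSat 𝔽 X)).inv else .zero

/-- `P_𝔽(X)`: the limit as `a → ∞` of the normalized evaluation of `W_𝔽(X)`. -/
noncomputable def Pr [Fintype P] (𝔽 : Program P) (X : Finset P) : ℝ :=
  Filter.limUnder Filter.atTop
    (fun a : ℝ => (W 𝔽 X).eval a / ∑ Y : Finset P, (W 𝔽 Y).eval a)

/-- `P^pnt_𝔽(X)`: the limit as `a → ∞` of the normalized evaluation of `W^pnt_𝔽(X)`. -/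
noncomputable def PrPnt [Fintype P] (𝔽 : Program P) (X : Finset P) : ℝ :=
  Filter.limUnder Filter.atTop
    (fun a : ℝ => (Wpnt 𝔽 X).eval a / ∑ Y : Finset P, (Wpnt 𝔽 Y).eval a)

/-- Weak equivalence: the same probability distribution. -/
def WeakEquiv [Fintype P] (𝔽 𝔾 : Program P) : Prop :=
  ∀ X : Finset P, Pr 𝔽 X = Pr 𝔾 X

/-- Strong equivalence of LP^MLN programs. -/
def StrongEquiv [Fintype P] (𝔽 𝔾 : Program P) : Prop :=
  ∀ (ℍ : Program P) (X : Finset P), Pr (𝔽 ∪ ℍ) X = Pr (𝔾 ∪ ℍ) X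

/-- Structural equivalence of LP^MLN programs. -/
def StructEquiv (𝔽 𝔾 : Program P) : Prop :=
  ∀ (ℍ : Program P) (X : Finset P), SoftStable (𝔽 ∪ ℍ) X ↔ SoftStable (𝔾 ∪ ℍ) X

/-- HT satisfaction `⟨Y,X⟩ ⊨ₕₜ F` (at the world "here"). -/
def htSat (Y X : Finset P) : Formula P → Prop
  | .atom p => p ∈ Y
  | .bot => False
  | .and F G => htSat Y X F ∧ htSat Y X G
  | .or F G => htSat Y X F ∨ htSat Y X G
  | .imp F G => (htSat Y X F → htSat Y X G) ∧ (Formula.imp F G).sat X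

/-- `⟨Y,X⟩` is an HT model of a set `Γ` of formulas. -/
def HTModel (Γ : Finset (Formula P)) (Y X : Finset P) : Prop :=
  Y ⊆ X ∧ ∀ F ∈ Γ, htSat Y X F

/-- `⟨Y,X⟩` is a soft HT model of an LP^MLN program `𝔽`. -/
def SoftHT (𝔽 : Program P) (Y X : Finset P) : Prop :=
  Y ⊆ X ∧ ∀ r ∈ progSat 𝔽 X, htSat Y X r.2

/-- The choice formula `{F}^ch = F ∨ ¬F`. -/
def Formula.ch (F : Formula P) : Formula P := .or F F.neg

/-- `{Γ}^ch`, choice formulas of a set of formulas. -/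
def chSet (Γ : Finset (Formula P)) : Finset (Formula P) := Γ.image Formula.ch

/-- Renaming of atoms. -/
def Formula.rename {Q : Type} (f : P → Q) : Formula P → Formula Q
  | .atom p => .atom (f p)
  | .bot => .bot
  | .and F G => .and (F.rename f) (G.rename f)
  | .or F G => .or (F.rename f) (G.rename f)
  | .imp F G => .imp (F.rename f) (G.rename f)

/-- `Δ_{𝒫'}(F)`, a formula over `𝒫 ∪ 𝒫'`; unprimed atoms are `Sum.inl p`,
primed atoms `p'` are `Sum.inr p`. -/
def Formula.delta : Formula P → Formula (P ⊕ P)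
  | .atom p => .atom (Sum.inr p)
  | .bot => .bot
  | .and F G => .and F.delta G.delta
  | .or F G => .or F.delta G.delta
  | .imp F G => .and (.imp F.delta G.delta)
      (.imp (F.rename Sum.inl) (G.rename Sum.inl))

/-- `Δ_{𝒫'}(Γ)` for a set of formulas. -/
def deltaSet (Γ : Finset (Formula P)) : Finset (Formula (P ⊕ P)) :=
  Γ.image Formula.delta

/-- The interpretation `Y' ∪ X` of `𝒫 ∪ 𝒫'`. -/
def primedInterp (Y X : Finset P) : Finset (P ⊕ P) :=
  X.image Sum.inl ∪ Y.image Sum.inr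

/-!
Since `X` satisfies `(𝔽̄_X)^X`, `X ∈ SM[𝔽 ∪ ℍ]` says exactly that no proper subset of `X`
satisfies both `(𝔽̄_X)^X` and `(ℍ̄_X)^X`; and whether `Y` satisfies a reduct relative to `X`
depends only on `Y ∩ X`. This gives the "if" direction. Conversely, for `Y ⊂ X` take for `ℍ` the
hard rules `p` (`p ∈ Y`) and `p → q` (`p, q ∈ X \ Y`): among the proper subsets of `X`, only `Y`
satisfies `(ℍ̄_X)^X`, so `X ∈ SM[𝔽 ∪ ℍ]` iff `Y` does not satisfy `(𝔽̄_X)^X`.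
-/

/-- `(𝔽̄_X)^X`. -/
noncomputable def progReduct (𝔽 : Program P) (X : Finset P) : Finset (Formula P) :=
  reductSet X (formulas (progSat 𝔽 X))

namespace Formula

lemma eval_reduct_self (X : Finset P) (F : Formula P) : (F.reduct X).eval X = F.eval X := by
  induction F with
  | atom p => by_cases h : p ∈ X <;> simp [reduct, eval, h]
  | bot => rfl
  | and F G ihF ihG | or F G ihF ihG | imp F G ihF ihG =>
    rw [reduct]
    split_ifs with h
    · simp only [eval] at h ⊢
      rw [ihF, ihG]
    · exact ((Bool.not_eq_true _).mp h).symm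

lemma eval_reduct_inter (X Y : Finset P) (F : Formula P) :
    (F.reduct X).eval Y = (F.reduct X).eval (Y ∩ X) := by
  induction F with
  | atom p => by_cases h : p ∈ X <;> simp [reduct, eval, h]
  | bot => rfl
  | and F G ihF ihG | or F G ihF ihG | imp F G ihF ihG =>
    rw [reduct]
    split_ifs
    · simp only [eval]
      rw [ihF, ihG]
    · rfl

end Formula

lemma satSet_union (Y : Finset P) (Γ Δ : Finset (Formula P)) :
    satSet Y (Γ ∪ Δ) ↔ satSet Y Γ ∧ satSet Y Δ :=
  Finset.forall_mem_union

lemma satSet_reductSet (X Y : Finset P) (Γ : Finset (Formula P)) :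
    satSet Y (reductSet X Γ) ↔ ∀ F ∈ Γ, (F.reduct X).sat Y :=
  Finset.forall_mem_image

lemma satSet_reductSet_inter (X Y : Finset P) (Γ : Finset (Formula P)) :
    satSet Y (reductSet X Γ) ↔ satSet (Y ∩ X) (reductSet X Γ) := by
  simp only [satSet_reductSet, Formula.sat, Formula.eval_reduct_inter X Y]

lemma satSet_progReduct (𝔽 : Program P) (X Y : Finset P) :
    satSet Y (progReduct 𝔽 X) ↔ ∀ r ∈ 𝔽, r.2.sat X → (r.2.reduct X).sat Y := by
  simp only [progReduct, satSet_reductSet, formulas, progSat, Finset.forall_mem_image,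
    Finset.mem_filter, and_imp]
  rfl

lemma satSet_progReduct_self (𝔽 : Program P) (X : Finset P) : satSet X (progReduct 𝔽 X) := by
  rw [satSet_progReduct]
  intro r _ hr
  rwa [Formula.sat, Formula.eval_reduct_self]

lemma progReduct_union (𝔽 ℍ : Program P) (X : Finset P) :
    progReduct (𝔽 ∪ ℍ) X = progReduct 𝔽 X ∪ progReduct ℍ X := by
  simp only [progReduct, progSat, formulas, reductSet, Finset.filter_union, Finset.image_union]

lemma satSet_progReduct_inter (𝔽 : Program P) (X Y : Finset P) :
    satSet Y (progReduct 𝔽 X) ↔ satSet (Y ∩ X) (progReduct 𝔽 X) :=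
  satSet_reductSet_inter X Y _

lemma softStable_iff (𝔽 : Program P) (X : Finset P) :
    SoftStable 𝔽 X ↔ ∀ Y ⊂ X, ¬ satSet Y (progReduct 𝔽 X) :=
  and_iff_right (satSet_progReduct_self 𝔽 X)

lemma softStable_union_iff (𝔽 ℍ : Program P) (X : Finset P) :
    SoftStable (𝔽 ∪ ℍ) X ↔
      ∀ Y ⊂ X, satSet Y (progReduct 𝔽 X) → ¬ satSet Y (progReduct ℍ X) := by
  simp only [softStable_iff, progReduct_union, satSet_union, not_and]

noncomputable def separatingProgram (Y X : Finset P) : Program P :=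
  Y.image (fun p => (Weight.hard, .atom p)) ∪
    ((X \ Y) ×ˢ (X \ Y)).image (fun pq => (Weight.hard, .imp (.atom pq.1) (.atom pq.2)))

lemma satSet_progReduct_separatingProgram {X Y : Finset P} (hYX : Y ⊆ X) (Z : Finset P) :
    satSet Z (progReduct (separatingProgram Y X) X) ↔
      Y ⊆ Z ∧ ∀ p ∈ X \ Y, ∀ q ∈ X \ Y, p ∈ Z → q ∈ Z := by
  rw [satSet_progReduct, separatingProgram, Finset.forall_mem_union, Finset.forall_mem_image,
    Finset.forall_mem_image]
  refine and_congr ?_ ?_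
  · refine forall₂_congr fun p hp => ?_
    simp [Formula.sat, Formula.reduct, Formula.eval, hYX hp]
  · have hrule : ∀ p ∈ X \ Y, ∀ q ∈ X \ Y, (Formula.imp (.atom p) (.atom q)).sat X ∧
        (((Formula.imp (.atom p) (.atom q)).reduct X).sat Z ↔ (p ∈ Z → q ∈ Z)) := by
      intro p hp q hq
      simp [Formula.sat, Formula.reduct, Formula.eval, (Finset.mem_sdiff.mp hp).1,
        (Finset.mem_sdiff.mp hq).1, imp_iff_not_or]
    simp only [Finset.mem_product, Prod.forall, and_imp]
    exact ⟨fun h p hp q hq => (hrule p hp q hq).2.mp (h p q hp hq (hrule p hp q hq).1),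
      fun h p q hp hq _ => (hrule p hp q hq).2.mpr (h p hp q hq)⟩

lemma satSet_progReduct_separatingProgram_iff_eq {X Y Z : Finset P} (hYX : Y ⊆ X)
    (hZX : Z ⊂ X) : satSet Z (progReduct (separatingProgram Y X) X) ↔ Z = Y := by
  rw [satSet_progReduct_separatingProgram hYX]
  constructor
  · rintro ⟨hYZ, hclosed⟩
    refine Finset.Subset.antisymm_iff.mpr ⟨fun p hpZ => ?_, hYZ⟩
    by_contra hpY
    have hp : p ∈ X \ Y := Finset.mem_sdiff.mpr ⟨hZX.subset hpZ, hpY⟩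
    refine hZX.not_subset fun q hqX => ?_
    by_cases hqY : q ∈ Y
    · exact hYZ hqY
    · exact hclosed p hp q (Finset.mem_sdiff.mpr ⟨hqX, hqY⟩) hpZ
  · rintro rfl
    exact ⟨subset_rfl, fun p hp _ _ hpZ => absurd hpZ (Finset.mem_sdiff.mp hp).2⟩

lemma softStable_union_separatingProgram_iff (𝔽 : Program P) {X Y : Finset P} (hYX : Y ⊂ X) :
    SoftStable (𝔽 ∪ separatingProgram Y X) X ↔ ¬ satSet Y (progReduct 𝔽 X) := by
  rw [softStable_union_iff]
  constructor
  · exact fun h hY => h Y hYX hY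
      ((satSet_progReduct_separatingProgram_iff_eq hYX.subset hYX).mpr rfl)
  · intro hY Z hZX hZ hsep
    rw [satSet_progReduct_separatingProgram_iff_eq hYX.subset hZX] at hsep
    exact hY (hsep ▸ hZ)

/-- structural equivalence iff for every `X` the reducts `(𝔽̄_X)^X` and
`(𝔾̄_X)^X` are classically equivalent. -/
theorem stmt9 {P : Type} [DecidableEq P] (𝔽 𝔾 : Program P) :
    StructEquiv 𝔽 𝔾 ↔
      ∀ X Y : Finset P,
        satSet Y (reductSet X (formulas (progSat 𝔽 X))) ↔
        satSet Y (reductSet X (formulas (progSat 𝔾 X))) := by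
  show _ ↔ ∀ X Y, satSet Y (progReduct 𝔽 X) ↔ satSet Y (progReduct 𝔾 X)
  constructor
  · intro h X Y
    rw [satSet_progReduct_inter, satSet_progReduct_inter 𝔾]
    rcases (Finset.inter_subset_right : Y ∩ X ⊆ X).eq_or_ssubset with heq | hss
    · rw [heq]
      exact iff_of_true (satSet_progReduct_self 𝔽 X) (satSet_progReduct_self 𝔾 X)
    · simpa only [softStable_union_separatingProgram_iff _ hss, not_iff_not]
        using h (separatingProgram (Y ∩ X) X) X
  · intro h ℍ X
    simp only [softStable_union_iff, h]

end LPMLN
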